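/- arXiv:2010.09546 — 3 statements merged into one kernel-verified Lean document; each statement's English description precedes it below -/
import Mathlib

section
/- (Simulation lemma, telescoping form.) Let S×A be finite, let T and T̂ be two transition kernels, r : S×A → ℝ a reward, γ ∈ (0,1), and π a policy. Let η and η̂ denote the (unnormalized) expected discounted returns of π under T and T̂ from the same initial distribution, and let ρ̂ be the normalized discounted state-action occupancy measure of π under T̂. Let V^π_T be the value function of π under T, and G(s,a) = E_{s'∼T̂(·|s,a)}[V^π_T(s')] - E_{s'∼T(·|s,a)}[V^π_T(s')]. Then η̂ - η = (γ/(1-γ)) · E_{(s,a)∼ρ̂}[G(s,a)]. -/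
/-- Telescoping simulation lemma for a finite MDP: the gap between the
expected returns of a policy under the true and the model dynamics equals
(γ/(1-γ)) times the expectation, under the model's normalized occupancy
measure, of the one-step value discrepancy G. -/
theorem stmt_6 {S A : Type*} [Fintype S] [Fintype A]
    (γ : ℝ) (hγ0 : 0 < γ) (hγ1 : γ < 1)
    (T That : S → A → S → ℝ)
    (hT : ∀ s a s', 0 ≤ T s a s') (hTsum : ∀ s a, ∑ s', T s a s' = 1)
    (hThat : ∀ s a s', 0 ≤ That s a s') (hThatsum : ∀ s a, ∑ s', That s a s' = 1)
    (r : S → A → ℝ)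
    (π : S → A → ℝ) (hπ : ∀ s a, 0 ≤ π s a) (hπsum : ∀ s, ∑ a, π s a = 1)
    (ν₀ : S → ℝ) (hν₀ : ∀ s, 0 ≤ ν₀ s) (hν₀sum : ∑ s, ν₀ s = 1)
    (V Vhat : S → ℝ)
    (hV : ∀ s, V s = ∑ a, π s a * (r s a + γ * ∑ s', T s a s' * V s'))
    (hVhat : ∀ s, Vhat s = ∑ a, π s a * (r s a + γ * ∑ s', That s a s' * Vhat s'))
    (νhat : S → ℝ) (ρhat : S → A → ℝ)
    (hρhat : ∀ s a, ρhat s a = νhat s * π s a)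
    (hflow : ∀ s', νhat s' = (1 - γ) * ν₀ s' + γ * ∑ s, ∑ a, ρhat s a * That s a s')
    (η ηhat : ℝ)
    (hη : η = ∑ s, ν₀ s * V s) (hηhat : ηhat = ∑ s, ν₀ s * Vhat s)
    (G : S → A → ℝ)
    (hG : ∀ s a, G s a = (∑ s', That s a s' * V s') - ∑ s', T s a s' * V s') :
    ηhat - η = (γ / (1 - γ)) * ∑ s, ∑ a, ρhat s a * G s a := by
  classical
  set W : S → ℝ := fun s => Vhat s - V s with hWdef
  have hW : ∀ s, W s = γ * ∑ a, π s a * ((∑ s', That s a s' * W s') + G s a) := by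
    intro s
    have h1 : ∀ a, ∑ s', That s a s' * Vhat s'
        = (∑ s', That s a s' * W s') + ∑ s', That s a s' * V s' := by
      intro a
      rw [← Finset.sum_add_distrib]
      exact Finset.sum_congr rfl fun s' _ => by simp [hWdef]; ring
    have : W s = ∑ a, π s a * (γ * ((∑ s', That s a s' * W s') + G s a)) := by
      simp only [hWdef]
      rw [hV s, hVhat s, ← Finset.sum_sub_distrib]
      refine Finset.sum_congr rfl fun a _ => ?_
      rw [hG s a, h1 a]
      ring
    rw [this, Finset.mul_sum]
    exact Finset.sum_congr rfl fun a _ => by ring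
  set K : ℝ := ∑ s, ∑ a, ρhat s a * ∑ s', That s a s' * W s' with hKdef
  have hside1 : ∑ s, νhat s * W s = γ * (K + ∑ s, ∑ a, ρhat s a * G s a) := by
    calc ∑ s, νhat s * W s
        = ∑ s, ∑ a, (γ * (ρhat s a * ∑ s', That s a s' * W s')
            + γ * (ρhat s a * G s a)) := by
          refine Finset.sum_congr rfl fun s _ => ?_
          rw [hW s, Finset.mul_sum, Finset.mul_sum]
          exact Finset.sum_congr rfl fun a _ => by rw [hρhat s a]; ring
      _ = γ * (K + ∑ s, ∑ a, ρhat s a * G s a) := by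
          simp only [Finset.sum_add_distrib, hKdef, ← Finset.mul_sum]
          ring
  have hside2 : ∑ s, νhat s * W s = (1 - γ) * ∑ s, ν₀ s * W s + γ * K := by
    calc ∑ s', νhat s' * W s'
        = ∑ s', ((1 - γ) * (ν₀ s' * W s')
            + γ * ∑ s, ∑ a, ρhat s a * That s a s' * W s') := by
          refine Finset.sum_congr rfl fun s' _ => ?_
          rw [hflow s']
          have hmul : (∑ s, ∑ a, ρhat s a * That s a s') * W s'
              = ∑ s, ∑ a, ρhat s a * That s a s' * W s' := by
            rw [Finset.sum_mul]
            exact Finset.sum_congr rfl fun s _ => Finset.sum_mul ..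
          rw [add_mul, mul_assoc γ, hmul]
          ring
      _ = (1 - γ) * ∑ s, ν₀ s * W s + γ * K := by
          rw [Finset.sum_add_distrib, ← Finset.mul_sum, ← Finset.mul_sum, hKdef]
          congr 2
          rw [Finset.sum_comm]
          refine Finset.sum_congr rfl fun s _ => ?_
          rw [Finset.sum_comm]
          refine Finset.sum_congr rfl fun a _ => ?_
          rw [Finset.mul_sum]
          exact Finset.sum_congr rfl fun s' _ => by ring
  have hkey : (1 - γ) * ∑ s, ν₀ s * W s = γ * ∑ s, ∑ a, ρhat s a * G s a := by
    have := hside1 ▸ hside2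
    linarith [this]
  have hηW : ηhat - η = ∑ s, ν₀ s * W s := by
    rw [hη, hηhat, ← Finset.sum_sub_distrib]
    exact Finset.sum_congr rfl fun s _ => by simp [hWdef]; ring
  rw [hηW]
  have h1γ : (1 : ℝ) - γ ≠ 0 := by linarith
  field_simp
  linarith [hkey]
end

section
/- Under the setting of the simulation lemma, suppose additionally that for all (s,a), G(s,a) belongs to a function class F₁ and that V^π_T belongs to a function class F₂. Let ρ_D be any probability distribution on S×A. Then |η̂[π] - η[π]| ≤ (γ/(1-γ)) · ( d_{F₁}(ρ_D, ρ̂) + E_{(s,a)∼ρ_D}[ d_{F₂}(T̂(·|s,a), T(·|s,a)) ] ), where d_{F}(P,Q) = sup_{f∈F} |E_P[f] - E_Q[f]| and the classes F₁, F₂ are closed under negation. -/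
/-- Alternative return-gap bound via IPMs: adding/subtracting the
expectation of G under a reference distribution ρ_D. -/
theorem stmt_7 {S A : Type*} [Fintype S] [Fintype A]
    (γ : ℝ) (hγ0 : 0 < γ) (hγ1 : γ < 1)
    (T That : S → A → S → ℝ)
    (hT : ∀ s a s', 0 ≤ T s a s') (hTsum : ∀ s a, ∑ s', T s a s' = 1)
    (hThat : ∀ s a s', 0 ≤ That s a s') (hThatsum : ∀ s a, ∑ s', That s a s' = 1)
    (r : S → A → ℝ)
    (π : S → A → ℝ) (hπ : ∀ s a, 0 ≤ π s a) (hπsum : ∀ s, ∑ a, π s a = 1)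
    (ν₀ : S → ℝ) (hν₀ : ∀ s, 0 ≤ ν₀ s) (hν₀sum : ∑ s, ν₀ s = 1)
    (V Vhat : S → ℝ)
    (hV : ∀ s, V s = ∑ a, π s a * (r s a + γ * ∑ s', T s a s' * V s'))
    (hVhat : ∀ s, Vhat s = ∑ a, π s a * (r s a + γ * ∑ s', That s a s' * Vhat s'))
    (νhat : S → ℝ) (ρhat : S → A → ℝ)
    (hρhat : ∀ s a, ρhat s a = νhat s * π s a)
    (hνhat : ∀ s, 0 ≤ νhat s)
    (hflow : ∀ s', νhat s' = (1 - γ) * ν₀ s' + γ * ∑ s, ∑ a, ρhat s a * That s a s')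
    (η ηhat : ℝ)
    (hη : η = ∑ s, ν₀ s * V s) (hηhat : ηhat = ∑ s, ν₀ s * Vhat s)
    (G : S → A → ℝ)
    (hG : ∀ s a, G s a = (∑ s', That s a s' * V s') - ∑ s', T s a s' * V s')
    (ρD : S → A → ℝ) (hρD : ∀ s a, 0 ≤ ρD s a) (hρDsum : ∑ s, ∑ a, ρD s a = 1)
    (F₁ : Set (S × A → ℝ)) (hGF₁ : (fun p : S × A => G p.1 p.2) ∈ F₁)
    (hF₁neg : ∀ f ∈ F₁, -f ∈ F₁)
    (F₂ : Set (S → ℝ)) (hVF₂ : V ∈ F₂) (hF₂neg : ∀ f ∈ F₂, -f ∈ F₂)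
    (dF₁ : ℝ)
    (hdF₁ : dF₁ = sSup {d : ℝ | ∃ f ∈ F₁,
      d = |(∑ s, ∑ a, ρD s a * f (s, a)) - ∑ s, ∑ a, ρhat s a * f (s, a)|})
    (hbdd₁ : BddAbove {d : ℝ | ∃ f ∈ F₁,
      d = |(∑ s, ∑ a, ρD s a * f (s, a)) - ∑ s, ∑ a, ρhat s a * f (s, a)|})
    (dF₂ : S → A → ℝ)
    (hdF₂ : ∀ s a, dF₂ s a = sSup {d : ℝ | ∃ g ∈ F₂,
      d = |(∑ s', That s a s' * g s') - ∑ s', T s a s' * g s'|})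
    (hbdd₂ : ∀ s a, BddAbove {d : ℝ | ∃ g ∈ F₂,
      d = |(∑ s', That s a s' * g s') - ∑ s', T s a s' * g s'|}) :
    |ηhat - η| ≤ (γ / (1 - γ)) * (dF₁ + ∑ s, ∑ a, ρD s a * dF₂ s a) := by
  have h1γ : (0:ℝ) < 1 - γ := by linarith
  -- Step A: per-state difference identity
  have hA : ∀ s, Vhat s - V s
      = γ * ∑ a, π s a * ((∑ s', That s a s' * (Vhat s' - V s')) + G s a) := by
    intro s
    rw [hV s, hVhat s, ← Finset.sum_sub_distrib, Finset.mul_sum]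
    apply Finset.sum_congr rfl
    intro a _
    have h2 : ∑ s', That s a s' * (Vhat s' - V s')
        = (∑ s', That s a s' * Vhat s') - ∑ s', That s a s' * V s' := by
      rw [← Finset.sum_sub_distrib]
      exact Finset.sum_congr rfl fun s' _ => by ring
    rw [hG, h2]; ring
  have hterm : ∀ s a, γ * (π s a * ((∑ s', That s a s' * (Vhat s' - V s')) + G s a)) * νhat s
      = γ * (ρhat s a * G s a) + γ * ∑ s', ρhat s a * That s a s' * (Vhat s' - V s') := by
    intro s a
    rw [hρhat s a]
    have h3 : γ * ∑ s', νhat s * π s a * That s a s' * (Vhat s' - V s')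
        = (∑ s', That s a s' * (Vhat s' - V s')) * (γ * π s a * νhat s) := by
      rw [Finset.mul_sum, Finset.sum_mul]
      exact Finset.sum_congr rfl fun s' _ => by ring
    rw [h3]; ring
  have step1 : ∑ s, νhat s * (Vhat s - V s)
      = ∑ s, ∑ a, (γ * (ρhat s a * G s a)
          + γ * ∑ s', ρhat s a * That s a s' * (Vhat s' - V s')) := by
    apply Finset.sum_congr rfl
    intro s _
    rw [hA s]
    have h4 : νhat s * (γ * ∑ a, π s a * ((∑ s', That s a s' * (Vhat s' - V s')) + G s a))
        = ∑ a, γ * (π s a * ((∑ s', That s a s' * (Vhat s' - V s')) + G s a)) * νhat s := by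
      rw [Finset.mul_sum, Finset.mul_sum]
      exact Finset.sum_congr rfl fun a _ => by ring
    rw [h4]
    exact Finset.sum_congr rfl fun a _ => hterm s a
  have step2 : ∑ s, ∑ a, γ * ∑ s', ρhat s a * That s a s' * (Vhat s' - V s')
      = ∑ s', (Vhat s' - V s') * (γ * ∑ s, ∑ a, ρhat s a * That s a s') := by
    have h5 : ∀ s a, γ * ∑ s', ρhat s a * That s a s' * (Vhat s' - V s')
        = ∑ s', γ * (ρhat s a * That s a s' * (Vhat s' - V s')) := by
      intro s a; rw [Finset.mul_sum]
    simp only [h5]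
    rw [show (∑ s, ∑ a, ∑ s', γ * (ρhat s a * That s a s' * (Vhat s' - V s')))
        = ∑ s', ∑ s, ∑ a, γ * (ρhat s a * That s a s' * (Vhat s' - V s')) from by
      rw [show (∑ s, ∑ a, ∑ s', γ * (ρhat s a * That s a s' * (Vhat s' - V s')))
          = ∑ s, ∑ s', ∑ a, γ * (ρhat s a * That s a s' * (Vhat s' - V s')) from
        Finset.sum_congr rfl fun s _ => Finset.sum_comm]
      exact Finset.sum_comm]
    apply Finset.sum_congr rfl
    intro s' _
    rw [Finset.mul_sum, Finset.mul_sum]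
    apply Finset.sum_congr rfl
    intro s _
    rw [Finset.mul_sum, Finset.mul_sum]
    exact Finset.sum_congr rfl fun a _ => by ring
  have hdiff : ηhat - η = ∑ s, ν₀ s * (Vhat s - V s) := by
    rw [hη, hηhat, ← Finset.sum_sub_distrib]
    exact Finset.sum_congr rfl fun s _ => by ring
  have e3 : ∑ s', (Vhat s' - V s') * (νhat s' - (1 - γ) * ν₀ s')
      = (∑ s, νhat s * (Vhat s - V s)) - (1 - γ) * (ηhat - η) := by
    rw [hdiff, Finset.mul_sum, ← Finset.sum_sub_distrib]
    exact Finset.sum_congr rfl fun s _ => by ring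
  have e1 : ∑ s, νhat s * (Vhat s - V s)
      = γ * (∑ s, ∑ a, ρhat s a * G s a)
        + ∑ s', (Vhat s' - V s') * (νhat s' - (1 - γ) * ν₀ s') := by
    rw [step1]
    simp only [Finset.sum_add_distrib]
    congr 1
    · simp only [Finset.mul_sum]
    · rw [step2]
      apply Finset.sum_congr rfl
      intro s' _
      rw [hflow s']
      ring
  have key : (1 - γ) * (ηhat - η) = γ * ∑ s, ∑ a, ρhat s a * G s a := by
    rw [e3] at e1
    linarith
  have hXval : ηhat - η = γ / (1 - γ) * ∑ s, ∑ a, ρhat s a * G s a := by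
    field_simp
    linarith
  have habs : |ηhat - η| = γ / (1 - γ) * |∑ s, ∑ a, ρhat s a * G s a| := by
    rw [hXval, abs_mul, abs_of_nonneg (by positivity : (0:ℝ) ≤ γ / (1 - γ))]
  have hb1 : |(∑ s, ∑ a, ρD s a * G s a) - ∑ s, ∑ a, ρhat s a * G s a| ≤ dF₁ := by
    rw [hdF₁]
    exact le_csSup hbdd₁ ⟨_, hGF₁, rfl⟩
  have hb2 : ∀ s a, |G s a| ≤ dF₂ s a := by
    intro s a
    rw [hdF₂]
    exact le_csSup (hbdd₂ s a) ⟨V, hVF₂, by rw [hG]⟩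
  have hb3 : |∑ s, ∑ a, ρD s a * G s a| ≤ ∑ s, ∑ a, ρD s a * dF₂ s a := by
    refine (Finset.abs_sum_le_sum_abs _ _).trans
      (Finset.sum_le_sum fun s _ => (Finset.abs_sum_le_sum_abs _ _).trans
        (Finset.sum_le_sum fun a _ => ?_))
    rw [abs_mul, abs_of_nonneg (hρD s a)]
    exact mul_le_mul_of_nonneg_left (hb2 s a) (hρD s a)
  have hXb : |∑ s, ∑ a, ρhat s a * G s a| ≤ dF₁ + ∑ s, ∑ a, ρD s a * dF₂ s a := by
    have h7 := abs_sub_abs_le_abs_sub (∑ s, ∑ a, ρhat s a * G s a)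
      (∑ s, ∑ a, ρD s a * G s a)
    rw [abs_sub_comm] at h7
    linarith
  rw [habs]
  exact mul_le_mul_of_nonneg_left hXb (by positivity)
end

section
/- (Finite-state version of the main theorem.) Let S, A be finite, γ ∈ (0,1), rewards 0 ≤ r ≤ R, true kernel T and model kernel T̂ with the same initial distribution, a behavioral policy π_D and a current policy π. Let η[π] = E_{ρ_T^π}[r] and η̂[π] = E_{ρ_{T̂}^π}[r] be normalized expected returns, ε_π = Σ_s |ν_T^π(s) - ν_T^{π_D}(s)|, and suppose for each s' the map (s,a) ↦ T̂(s'|s,a) lies in F. Then η[π] ≥ η̂[π] - R·ε_π - γR·|S|·d_F(ρ_T^{π_D}, ρ_{T̂}^π) - γR·E_{(s,a)∼ρ_T^{π_D}}[ Σ_{s'} |T(s'|s,a) - T̂(s'|s,a)| ]. -/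
/-- Finite-state version of Theorem 1 (AMPO lower bound on the expected
return), with the total-variation model-error term kept explicit. -/
theorem stmt_13 {S A : Type*} [Fintype S] [Fintype A]
    (γ : ℝ) (hγ0 : 0 < γ) (hγ1 : γ < 1)
    (R : ℝ) (r : S → A → ℝ) (hr0 : ∀ s a, 0 ≤ r s a) (hrR : ∀ s a, r s a ≤ R)
    (T That : S → A → S → ℝ)
    (hT : ∀ s a s', 0 ≤ T s a s') (hTsum : ∀ s a, ∑ s', T s a s' = 1)
    (hThat : ∀ s a s', 0 ≤ That s a s') (hThatsum : ∀ s a, ∑ s', That s a s' = 1)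
    (π πD : S → A → ℝ)
    (hπ : ∀ s a, 0 ≤ π s a) (hπsum : ∀ s, ∑ a, π s a = 1)
    (hπD : ∀ s a, 0 ≤ πD s a) (hπDsum : ∀ s, ∑ a, πD s a = 1)
    (ν₀ : S → ℝ) (hν₀ : ∀ s, 0 ≤ ν₀ s) (hν₀sum : ∑ s, ν₀ s = 1)
    -- normalized visit distribution and occupancy measure of π under T
    (νT : S → ℝ) (ρT : S → A → ℝ)
    (hρT : ∀ s a, ρT s a = νT s * π s a)
    (hνTflow : ∀ s', νT s' = (1 - γ) * ν₀ s' + γ * ∑ s, ∑ a, ρT s a * T s a s')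
    -- normalized visit distribution and occupancy measure of π_D under T
    (νD : S → ℝ) (ρD : S → A → ℝ)
    (hρD : ∀ s a, ρD s a = νD s * πD s a)
    (hνDflow : ∀ s', νD s' = (1 - γ) * ν₀ s' + γ * ∑ s, ∑ a, ρD s a * T s a s')
    (hνD0 : ∀ s, 0 ≤ νD s)
    -- normalized visit distribution and occupancy measure of π under the model T̂
    (νhat : S → ℝ) (ρhat : S → A → ℝ)
    (hρhat : ∀ s a, ρhat s a = νhat s * π s a)
    (hνhatflow : ∀ s', νhat s' =
      (1 - γ) * ν₀ s' + γ * ∑ s, ∑ a, ρhat s a * That s a s')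
    -- normalized expected returns
    (η ηhat : ℝ)
    (hη : η = ∑ s, ∑ a, ρT s a * r s a)
    (hηhat : ηhat = ∑ s, ∑ a, ρhat s a * r s a)
    -- policy-shift term
    (επ : ℝ) (hεπ : επ = ∑ s, |νT s - νD s|)
    -- witness class and IPM
    (F : Set (S × A → ℝ))
    (hTF : ∀ s' : S, (fun p : S × A => That p.1 p.2 s') ∈ F)
    (hFneg : ∀ f ∈ F, -f ∈ F)
    (dF : ℝ)
    (hdF : dF = sSup {d : ℝ | ∃ f ∈ F,
      d = |(∑ s, ∑ a, ρD s a * f (s, a)) - ∑ s, ∑ a, ρhat s a * f (s, a)|})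
    (hbdd : BddAbove {d : ℝ | ∃ f ∈ F,
      d = |(∑ s, ∑ a, ρD s a * f (s, a)) - ∑ s, ∑ a, ρhat s a * f (s, a)|}) :
    η ≥ ηhat - R * επ - γ * R * (Fintype.card S : ℝ) * dF -
      γ * R * ∑ s, ∑ a, ρD s a * ∑ s', |T s a s' - That s a s'| := by
  classical
  rcases isEmpty_or_nonempty S with hS | hS
  · have hcard : (Fintype.card S : ℝ) = 0 := by simp
    simp only [Finset.univ_eq_empty, Finset.sum_empty] at hη hηhat hεπ
    rw [hη, hηhat, hεπ, hcard]
    simp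
  · -- S nonempty; A nonempty
    have hA : Nonempty A := by
      by_contra h
      rw [not_nonempty_iff] at h
      have := hπsum (Classical.arbitrary S)
      simp at this
    obtain ⟨s₀⟩ := hS
    obtain ⟨a₀⟩ := hA
    have hR0 : 0 ≤ R := (hr0 s₀ a₀).trans (hrR s₀ a₀)
    have hρD0 : ∀ s a, 0 ≤ ρD s a := fun s a => by
      rw [hρD]; exact mul_nonneg (hνD0 s) (hπD s a)
    set M : ℝ := ∑ s, ∑ a, ρD s a * ∑ s', |T s a s' - That s a s'| with hM
    -- IPM bound for the witness functions
    have hdFge : ∀ s' : S,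
        |∑ s, ∑ a, (ρD s a - ρhat s a) * That s a s'| ≤ dF := by
      intro s'
      have heq : ∑ s, ∑ a, (ρD s a - ρhat s a) * That s a s'
          = (∑ s, ∑ a, ρD s a * That s a s')
            - ∑ s, ∑ a, ρhat s a * That s a s' := by
        simp [sub_mul, Finset.sum_sub_distrib]
      rw [heq, hdF]
      exact le_csSup hbdd ⟨fun p => That p.1 p.2 s', hTF s', rfl⟩
    -- flow difference
    have hdiff : ∀ s', νD s' - νhat s'
        = γ * ((∑ s, ∑ a, ρD s a * (T s a s' - That s a s'))
            + ∑ s, ∑ a, (ρD s a - ρhat s a) * That s a s') := by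
      intro s'
      rw [hνDflow s', hνhatflow s']
      have h1 : ∀ s a, ρD s a * (T s a s' - That s a s')
          + (ρD s a - ρhat s a) * That s a s'
          = ρD s a * T s a s' - ρhat s a * That s a s' := fun s a => by ring
      rw [← Finset.sum_add_distrib]
      simp only [← Finset.sum_add_distrib, h1, Finset.sum_sub_distrib]
      ring
    -- pointwise bound on |νD - νhat|
    have hpt : ∀ s', |νD s' - νhat s'|
        ≤ γ * ((∑ s, ∑ a, ρD s a * |T s a s' - That s a s'|) + dF) := by
      intro s'
      rw [hdiff s', abs_mul, abs_of_pos hγ0]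
      refine mul_le_mul_of_nonneg_left ?_ hγ0.le
      refine (abs_add_le _ _).trans (add_le_add ?_ (hdFge s'))
      refine (Finset.abs_sum_le_sum_abs _ _).trans (Finset.sum_le_sum fun s _ => ?_)
      refine (Finset.abs_sum_le_sum_abs _ _).trans (Finset.sum_le_sum fun a _ => ?_)
      rw [abs_mul, abs_of_nonneg (hρD0 s a)]
    -- summed bound on ∑ |νD - νhat|
    have hDB : ∑ s', |νD s' - νhat s'| ≤ γ * (M + (Fintype.card S : ℝ) * dF) := by
      calc ∑ s', |νD s' - νhat s'|
          ≤ ∑ s', γ * ((∑ s, ∑ a, ρD s a * |T s a s' - That s a s'|) + dF) :=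
            Finset.sum_le_sum fun s' _ => hpt s'
        _ = γ * (M + (Fintype.card S : ℝ) * dF) := by
            rw [← Finset.mul_sum, Finset.sum_add_distrib]
            congr 2
            · rw [hM, Finset.sum_comm]
              refine Finset.sum_congr rfl fun s _ => ?_
              rw [Finset.sum_comm]
              refine Finset.sum_congr rfl fun a _ => ?_
              rw [Finset.mul_sum]
            · simp [Finset.card_univ, mul_comm]
    -- triangle inequality through νD
    have hDν : ∑ s, |νT s - νhat s| ≤ επ + ∑ s', |νD s' - νhat s'| := by
      rw [hεπ, ← Finset.sum_add_distrib]
      exact Finset.sum_le_sum fun s _ => abs_sub_le _ _ _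
    -- return difference via visit distributions
    have hkey : η - ηhat = ∑ s, (νT s - νhat s) * (∑ a, π s a * r s a) := by
      rw [hη, hηhat, ← Finset.sum_sub_distrib]
      refine Finset.sum_congr rfl fun s _ => ?_
      rw [← Finset.sum_sub_distrib, Finset.mul_sum]
      exact Finset.sum_congr rfl fun a _ => by rw [hρT, hρhat]; ring
    have hgR : ∀ s, ∑ a, π s a * r s a ≤ R := by
      intro s
      calc ∑ a, π s a * r s a ≤ ∑ a, π s a * R :=
            Finset.sum_le_sum fun a _ => mul_le_mul_of_nonneg_left (hrR s a) (hπ s a)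
        _ = R := by rw [← Finset.sum_mul, hπsum s, one_mul]
    have hg0 : ∀ s, 0 ≤ ∑ a, π s a * r s a := fun s =>
      Finset.sum_nonneg fun a _ => mul_nonneg (hπ s a) (hr0 s a)
    have hstepA : ηhat - η ≤ R * ∑ s, |νT s - νhat s| := by
      have : ∀ s, -(|νT s - νhat s| * R) ≤ (νT s - νhat s) * (∑ a, π s a * r s a) := by
        intro s
        nlinarith [neg_abs_le (νT s - νhat s), abs_nonneg (νT s - νhat s),
          hg0 s, hgR s]
      have hsum : ∑ s, -(|νT s - νhat s| * R)
          ≤ ∑ s, (νT s - νhat s) * (∑ a, π s a * r s a) :=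
        Finset.sum_le_sum fun s _ => this s
      rw [← hkey] at hsum
      have : ∑ s, -(|νT s - νhat s| * R) = -(R * ∑ s, |νT s - νhat s|) := by
        simp [Finset.mul_sum, mul_comm]
      linarith [hsum, this ▸ hsum]
    -- combine
    have hchain : ηhat - η ≤ R * (επ + γ * (M + (Fintype.card S : ℝ) * dF)) := by
      calc ηhat - η ≤ R * ∑ s, |νT s - νhat s| := hstepA
        _ ≤ R * (επ + ∑ s', |νD s' - νhat s'|) := by
            exact mul_le_mul_of_nonneg_left hDν hR0
        _ ≤ R * (επ + γ * (M + (Fintype.card S : ℝ) * dF)) := by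
            refine mul_le_mul_of_nonneg_left (by linarith [hDB]) hR0
    have hexp : R * (επ + γ * (M + (Fintype.card S : ℝ) * dF))
        = R * επ + γ * R * (Fintype.card S : ℝ) * dF + γ * R * M := by ring
    rw [hexp] at hchain
    linarith
end
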